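/- arXiv:1406.5700 — 3 statements merged into one kernel-verified Lean document; each statement's English description precedes it below -/
import Mathlib

section
/- For any Kripke frame F and any modal formula φ, if φ is valid in the ultrafilter extension F^{ue}, then φ is valid in F. -/
/-- Modal formulas over a set of indices `Λ` (propositional variables `ℕ`,
`⊥`, implication, and diamonds `◇_λ`). -/
inductive ModalFormula (Λ : Type*) : Type _
  | var : ℕ → ModalFormula Λ
  | bot : ModalFormula Λ
  | imp : ModalFormula Λ → ModalFormula Λ → ModalFormula Λ
  | dia : Λ → ModalFormula Λ → ModalFormula Λ

/-- Truth of a modal formula at a point of a Kripke frame under a valuation. -/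
def msat {W Λ : Type*} (R : Λ → W → W → Prop) (θ : ℕ → Set W) :
    W → ModalFormula Λ → Prop
  | x, .var n => x ∈ θ n
  | _, .bot => False
  | x, .imp φ ψ => msat R θ x φ → msat R θ x ψ
  | x, .dia l φ => ∃ y, R l x y ∧ msat R θ y φ

/-- Validity of a modal formula in a Kripke frame. -/
def mvalid {W Λ : Type*} (R : Λ → W → W → Prop) (φ : ModalFormula Λ) : Prop :=
  ∀ (θ : ℕ → Set W) (x : W), msat R θ x φ

/-- The relation of the ultrafilter extension. -/
def ueRel {W : Type*} (R : W → W → Prop) (u u' : Ultrafilter W) : Prop :=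
  ∀ X : Set W, X ∈ u' → {z | ∃ x ∈ X, R z x} ∈ u

lemma truth_lemma {W Λ : Type*} (R : Λ → W → W → Prop) (θ : ℕ → Set W) :
    ∀ (φ : ModalFormula Λ) (u : Ultrafilter W),
      msat (fun l => ueRel (R l)) (fun n => {u : Ultrafilter W | θ n ∈ u}) u φ ↔
        {x | msat R θ x φ} ∈ u := by
  intro φ
  induction φ with
  | var n => intro u; simp [msat]
  | bot =>
    intro u
    simp only [msat, false_iff]
    intro hc
    exact Ultrafilter.empty_notMem (by simpa using hc : (∅ : Set W) ∈ u)
  | imp φ ψ ihφ ihψ =>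
    intro u
    simp only [msat, ihφ, ihψ]
    constructor
    · intro h
      rcases u.mem_or_compl_mem {x | msat R θ x φ} with hm | hm
      · exact Filter.mem_of_superset (Filter.inter_mem hm (h hm))
          (fun x hx _ => hx.2)
      · exact Filter.mem_of_superset hm (fun x hx h' => absurd h' hx)
    · intro h hφ
      exact Filter.mem_of_superset (Filter.inter_mem h hφ) (fun x hx => hx.1 hx.2)
  | dia l φ ih =>
    intro u
    simp only [msat]
    constructor
    · rintro ⟨v, hRv, hv⟩
      exact Filter.mem_of_superset (hRv _ ((ih v).mp hv))
        (fun z ⟨x, hx, hR⟩ => ⟨x, hR, hx⟩)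
    · intro hdia
      set S := {x | msat R θ x φ} with hS
      -- the filter of sets Y with □(S → Y) ∈ u
      let F : Filter W :=
        { sets := {Y | {z | ∀ x, R l z x → x ∈ S → x ∈ Y} ∈ u}
          univ_sets := Filter.univ_mem' (fun z x hR hxS => trivial)
          sets_of_superset := fun {Y Z} hY hYZ => Filter.mem_of_superset hY
            (fun z hz x hR hxS => hYZ (hz x hR hxS))
          inter_sets := fun {Y Z} hY hZ => Filter.mem_of_superset
            (Filter.inter_mem hY hZ)
            (fun z hz x hR hxS => ⟨hz.1 x hR hxS, hz.2 x hR hxS⟩) }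
      have hFne : F.NeBot := by
        constructor
        intro hbot
        have hempty : (∅ : Set W) ∈ F := hbot ▸ Filter.mem_bot
        have h1 : {z | ∀ x, R l z x → x ∈ S → x ∈ (∅ : Set W)} ∈ u := hempty
        obtain ⟨z, hz1, hz2⟩ := Ultrafilter.nonempty_of_mem (u.inter_mem hdia h1)
        obtain ⟨y, hRy, hy⟩ := hz1
        exact hz2 y hRy hy
      let v : Ultrafilter W := Ultrafilter.of F
      have hvF : (↑v : Filter W) ≤ F := Ultrafilter.of_le F
      have hSF : S ∈ F := by
        show {z | ∀ x, R l z x → x ∈ S → x ∈ S} ∈ u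
        exact Filter.univ_mem' (fun z x hR hxS => hxS)
      have hSv : S ∈ v := hvF hSF
      refine ⟨v, ?_, (ih v).mpr hSv⟩
      intro X hX
      by_contra hc
      have hcompl : {z | ∃ x ∈ X, R l z x}ᶜ ∈ u := (u.compl_mem_iff_notMem).mpr hc
      have hXcF : Xᶜ ∈ F := by
        show {z | ∀ x, R l z x → x ∈ S → x ∈ Xᶜ} ∈ u
        refine Filter.mem_of_superset hcompl ?_
        intro z hz x hR _ hxX
        exact hz ⟨x, hxX, hR⟩
      exact (Ultrafilter.compl_mem_iff_notMem.mp (hvF hXcF)) hX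

/-- If a modal formula is valid in the ultrafilter extension `F^{ue}` of a
Kripke frame `F`, then it is valid in `F`. -/
theorem stmt_3 {W Λ : Type*} (R : Λ → W → W → Prop) (φ : ModalFormula Λ)
    (h : mvalid (fun l => ueRel (R l)) φ) : mvalid R φ := by
  intro θ x
  have := (truth_lemma R θ φ (pure x)).mp
    (h (fun n => {u : Ultrafilter W | θ n ∈ u}) (pure x))
  simpa using this
end

section
/- Let D be a diagram with spanning tree T and associated hybrid formula η^D. Then for any Kripke frame F and any point w of F: F, w ⊨ η^D (i.e., there exists a nominal valuation making η^D true at w) if and only if F ⊨ e^D(w), where e^D(x_0) = ∃x_1...∃x_n ⋀{x_i R_λ x_j | x_i R^D_λ x_j}. -/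
/-- A directed path along labelled relations. -/
inductive IsPath {W Λ : Type*} (R : Λ → W → W → Prop) : W → List (Λ × W) → W → Prop
  | nil (x : W) : IsPath R x [] x
  | cons {x y z : W} {l : Λ} {p : List (Λ × W)} :
      R l x y → IsPath R y p z → IsPath R x ((l, y) :: p) z

/-- Rootedness: every point is reachable from the root. -/
def Rooted {W Λ : Type*} (R : Λ → W → W → Prop) (x0 : W) : Prop :=
  ∀ y : W, ∃ p, IsPath R x0 p y

/-- A tree with root `r`. -/
def IsTree {W Λ : Type*} (R : Λ → W → W → Prop) (r : W) : Prop :=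
  (∀ (l : Λ) (z : W), ¬ R l z r) ∧
  ∀ x : W, x ≠ r → ∃! p : List (Λ × W), IsPath R r p x

theorem isPath_append' {W Λ : Type*} {R : Λ → W → W → Prop} {x y z : W}
    {p q : List (Λ × W)} (h1 : IsPath R x p y) (h2 : IsPath R y q z) :
    IsPath R x (p ++ q) z := by
  induction h1 with
  | nil => exact h2
  | cons h _ ih => exact .cons h (ih h2)

theorem isPath_last' {W Λ : Type*} {R : Λ → W → W → Prop} {x z : W}
    {p : List (Λ × W)} (h : IsPath R x p z) (hp : p ≠ []) : ∃ l y, R l y z := by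
  induction h with
  | nil => exact absurd rfl hp
  | @cons x y z l p h hrest ih =>
    cases p with
    | nil => cases hrest; exact ⟨l, x, h⟩
    | cons a q => exact ih (by simp)

/-- Let `D` be a diagram on `{x_0,…,x_n}` with spanning tree `T`, and let
`H τ i x` express the truth of the hybrid formula `η^D_i` at point `x` under
nominal valuation `τ` (characterised by the recursive equations
`η^D_i = χ^D_i ∧ ⋀_{x_i T_λ x_k} ◇_λ η^D_k`, where
`χ^D_i = j_i ∧ ⋀_{x_i D_λ x_k} ◇_λ j_k`).  Then for a Kripke frame `F` and a
point `w`: some nominal valuation makes `η^D = η^D_0` true at `w` iff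
`F ⊨ e^D(w)`, i.e. there are witnesses `x_1,…,x_n` realising all edges of `D`
with `x_0 = w`. -/
theorem stmt_10 {W Λ : Type*} (n : ℕ)
    (D : Λ → Fin (n + 1) → Fin (n + 1) → Prop) (hroot : Rooted D 0)
    (T : Λ → Fin (n + 1) → Fin (n + 1) → Prop) (htree : IsTree T 0)
    (hsub : ∀ (l : Λ) (i j : Fin (n + 1)), T l i j → D l i j)
    (R : Λ → W → W → Prop)
    (H : (Fin (n + 1) → W) → Fin (n + 1) → W → Prop)
    (hH : ∀ (τ : Fin (n + 1) → W) (i : Fin (n + 1)) (x : W),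
      H τ i x ↔
        ((x = τ i ∧ ∀ (l : Λ) (k : Fin (n + 1)), D l i k → ∃ y, R l x y ∧ y = τ k) ∧
          ∀ (l : Λ) (k : Fin (n + 1)), T l i k → ∃ y, R l x y ∧ H τ k y))
    (w : W) :
    (∃ τ : Fin (n + 1) → W, H τ 0 w) ↔
      (∃ τ : Fin (n + 1) → W, τ 0 = w ∧
        ∀ (l : Λ) (i k : Fin (n + 1)), D l i k → R l (τ i) (τ k)) := by
  constructor
  · rintro ⟨τ, hτ⟩
    -- first, w = τ 0
    have hw : w = τ 0 := ((hH τ 0 w).1 hτ).1.1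
    -- propagation along tree paths
    have step : ∀ (x : Fin (n+1)) (p : List (Λ × Fin (n+1))) (i : Fin (n+1)),
        IsPath T x p i → H τ x (τ x) → H τ i (τ i) := by
      intro x p i hp
      induction hp with
      | nil => exact id
      | @cons x y z l p h _ ih =>
        intro hx
        apply ih
        obtain ⟨y', hy', hH'⟩ := ((hH τ x (τ x)).1 hx).2 l y h
        have : y' = τ y := ((hH τ y y').1 hH').1.1
        rwa [this] at hH'
    have hall : ∀ i : Fin (n+1), H τ i (τ i) := by
      intro i
      by_cases hi : i = 0
      · subst hi; rwa [hw] at hτ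
      · obtain ⟨p, hp, -⟩ := htree.2 i hi
        exact step 0 p i hp (by rwa [hw] at hτ)
    refine ⟨τ, hw.symm, fun l i k hd => ?_⟩
    obtain ⟨y, hy, rfl⟩ := ((hH τ i (τ i)).1 (hall i)).1.2 l k hd
    exact hy
  · rintro ⟨τ, hw, hedges⟩
    -- measure: size of the T-reachable set
    set reach : Fin (n+1) → Set (Fin (n+1)) :=
      fun i => {x | ∃ p, IsPath T i p x} with hreach
    have hself : ∀ i, i ∈ reach i := fun i => ⟨[], .nil i⟩
    have hlt : ∀ (l : Λ) (i k : Fin (n+1)), T l i k →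
        (reach k).ncard < (reach i).ncard := by
      intro l i k ht
      have hsubset : reach k ⊆ reach i := by
        rintro x ⟨p, hp⟩
        exact ⟨(l, k) :: p, .cons ht hp⟩
      have hnotin : i ∉ reach k := by
        rintro ⟨p, hp⟩
        by_cases hi : i = 0
        · subst hi
          obtain ⟨l', y, hy⟩ := isPath_last' (IsPath.cons ht hp) (by simp)
          exact htree.1 l' y hy
        · obtain ⟨q, hq, huniq⟩ := htree.2 i hi
          have h1 := huniq (q ++ (l, k) :: p) (isPath_append' hq (IsPath.cons ht hp))
          have : (q ++ (l, k) :: p).length = q.length := by rw [h1]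
          simp at this
      exact Set.ncard_lt_ncard ⟨hsubset, fun hs => hnotin (hs (hself i))⟩
        (Set.toFinite _)
    have key : ∀ (N : ℕ) (i : Fin (n+1)), (reach i).ncard ≤ N → H τ i (τ i) := by
      intro N
      induction N with
      | zero =>
        intro i h
        have := (Set.ncard_pos (Set.toFinite _)).2 ⟨i, hself i⟩
        omega
      | succ N ih =>
        intro i h
        rw [hH]
        refine ⟨⟨rfl, fun l k hd => ⟨τ k, hedges l i k hd, rfl⟩⟩, ?_⟩
        intro l k ht
        refine ⟨τ k, hedges l i k (hsub l i k ht), ih k ?_⟩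
        have := hlt l i k ht
        omega
    refine ⟨τ, ?_⟩
    have := key (reach 0).ncard 0 le_rfl
    rwa [hw] at this
end

section
/- Let D be a globally minimal rooted diagram with an inner undirected cycle, and let F^D_+, F^D_-, points x_d, x_{d'}, index λ_d, and injective homomorphism g satisfy conditions (C-i)–(C-v) of the saturation construction. Then F^D_- does not satisfy e^D(w_0). More precisely: if every homomorphism h from D to F^D_+ has image exactly {g(x_0),...,g(x_n)} and reflects all relations (h(x_i) R_λ h(x_j) implies x_i R_λ x_j), and F^D_- = F^D_+ minus the single edge (g(x_d), g(x_{d'}), λ_d) where x_d R^D_{λ_d} x_{d'}, then there is no homomorphism from D to F^D_- sending x_0 to w_0. -/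
/-- Under conditions (C-i)–(C-v): `D` is a diagram on `{x_0,…,x_n}`,
`g : D → F^D_+` is an injective homomorphism with `g x_0 = w_0`, every
homomorphism `h : D → F^D_+` (rooted at `w_0`) has image exactly
`{g x_0, …, g x_n}` and reflects all relations, and `F^D_-` is `F^D_+` minus
the single edge `(g x_d, g x_{d'}, λ_d)`, where `x_d D_{λ_d} x_{d'}`.  Then
`F^D_- ⊭ e^D(w_0)`: there is no homomorphism from `D` to `F^D_-` sending
`x_0` to `w_0`. -/
theorem stmt_13 {Λ V : Type*} (n : ℕ)
    (D : Λ → Fin (n + 1) → Fin (n + 1) → Prop) (hroot : Rooted D 0)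
    (Rp : Λ → V → V → Prop) (w0 : V)
    (g : Fin (n + 1) → V) (hg_inj : Function.Injective g) (hg0 : g 0 = w0)
    (hg_hom : ∀ (l : Λ) (i j : Fin (n + 1)), D l i j → Rp l (g i) (g j))
    (d d' : Fin (n + 1)) (ld : Λ) (hd : D ld d d')
    (Rm : Λ → V → V → Prop)
    (hRm : ∀ (l : Λ) (x y : V),
      Rm l x y ↔ Rp l x y ∧ ¬ (l = ld ∧ x = g d ∧ y = g d'))
    (himage : ∀ h : Fin (n + 1) → V, h 0 = w0 →
      (∀ (l : Λ) (i j : Fin (n + 1)), D l i j → Rp l (h i) (h j)) →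
      Set.range h = Set.range g ∧
        ∀ (l : Λ) (i j : Fin (n + 1)), Rp l (h i) (h j) → D l i j) :
    ¬ ∃ h : Fin (n + 1) → V, h 0 = w0 ∧
        ∀ (l : Λ) (i j : Fin (n + 1)), D l i j → Rm l (h i) (h j) := by
  rintro ⟨h, h0, hhom⟩
  have hhomp : ∀ (l : Λ) (i j : Fin (n + 1)), D l i j → Rp l (h i) (h j) :=
    fun l i j hij => ((hRm _ _ _).mp (hhom l i j hij)).1
  obtain ⟨hr, _⟩ := himage h h0 hhomp
  obtain ⟨_, hg_refl⟩ := himage g hg0 hg_hom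
  -- define σ with g (σ i) = h i
  have hmem : ∀ i, ∃ j, g j = h i := by
    intro i
    have : h i ∈ Set.range g := hr ▸ Set.mem_range_self i
    exact this
  choose σ hσ using hmem
  have σhom : ∀ (l : Λ) (i j : Fin (n + 1)), D l i j → D l (σ i) (σ j) := by
    intro l i j hij
    apply hg_refl
    rw [hσ, hσ]
    exact hhomp l i j hij
  have σsurj : Function.Surjective σ := by
    intro j
    have : g j ∈ Set.range h := hr ▸ Set.mem_range_self j
    obtain ⟨i, hi⟩ := this
    exact ⟨i, hg_inj (by rw [hσ, hi])⟩
  have σbij : Function.Bijective σ := Finite.surjective_iff_bijective.mp σsurj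
  let e : Equiv.Perm (Fin (n + 1)) := Equiv.ofBijective σ σbij
  have powhom : ∀ (k : ℕ) (l : Λ) (i j : Fin (n + 1)), D l i j →
      D l ((e ^ k) i) ((e ^ k) j) := by
    intro k
    induction k with
    | zero => simpa using fun l i j hij => hij
    | succ k ih =>
      intro l i j hij
      have := σhom l _ _ (ih l i j hij)
      simpa [pow_succ', Equiv.ofBijective, e] using this
  have hm : e ^ orderOf e = 1 := pow_orderOf_eq_one e
  have hmpos : 0 < orderOf e := orderOf_pos e
  obtain ⟨m, hm'⟩ := Nat.exists_eq_add_of_lt hmpos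
  rw [zero_add] at hm'
  -- τ := e ^ m, σ ∘ τ = id
  have key : ∀ x, σ ((e ^ m) x) = x := by
    intro x
    have h1 : (e ^ (m + 1)) x = x := by rw [← hm']; rw [hm]; rfl
    calc σ ((e ^ m) x) = e ((e ^ m) x) := rfl
      _ = (e ^ (m + 1)) x := by rw [pow_succ']; rfl
      _ = x := h1
  have hDij : D ld ((e ^ m) d) ((e ^ m) d') := powhom m ld d d' hd
  have := hhom ld _ _ hDij
  rw [hRm] at this
  exact this.2 ⟨rfl, by rw [← hσ, key], by rw [← hσ, key]⟩
end
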